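/- arXiv:1508.02738 — 2 statements merged into one kernel-verified Lean document; each statement's English description precedes it below -/
import Mathlib

section
/- For integers n ≥ m ≥ 0 and δ ∈ {0,1}, the integral of P_{2m+δ}(y)·y^{2n+δ} over [-1,1] equals √π·Γ(2n+1+δ) / (2^{2n+δ}·Γ(n−m+1)·Γ(3/2+n+m+δ)). -/
open Polynomial MeasureTheory intervalIntegral

/-- Legendre polynomials via Bonnet recursion. -/
noncomputable def legendre : ℕ → Polynomial ℝ
  | 0 => 1
  | 1 => X
  | (n + 2) => C ((2 * (n:ℝ) + 3) / ((n:ℝ) + 2)) * X * legendre (n + 1)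
      - C (((n:ℝ) + 1) / ((n:ℝ) + 2)) * legendre n

/-!
Write `I k p = ∫ y in -1..1, P_k(y) y^p`. Bonnet's recursion gives
`I (k+2) p = (2k+3)/(k+2) · I (k+1) (p+1) - (k+1)/(k+2) · I k p`, and the Gamma expression
satisfies the same recursion, by `Γ(s+1) = s Γ(s)` alone. The base cases `k = 0, 1` are the
moments `2/(p+1)` of `y^p` for even `p`, which match the Gamma expression by Legendre's
duplication formula. Induction on `k`, for all `p ≥ k` of the parity of `k` at once, concludes.
-/

open Real

theorem Real.two_pow_mul_Gamma_mul_Gamma_add_half_natCast (j : ℕ) :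
    2 ^ j * (Gamma ((j + 1) / 2) * Gamma ((j + 1) / 2 + 1 / 2)) = √π * Gamma (j + 1) := by
  rw [Gamma_mul_Gamma_add_half, show 2 * (((j : ℝ) + 1) / 2) = j + 1 by ring,
    show 1 - ((j : ℝ) + 1) = -j by ring, rpow_neg zero_le_two, rpow_natCast]
  field_simp

-- Equals `I k p` when `k ≤ p` have equal parity, i.e. `k = 2m+δ` and `p = 2n+δ` with `m ≤ n`.
noncomputable def legendreMoment (k p : ℕ) : ℝ :=
  √π * Gamma (p + 1) / (2 ^ p * Gamma ((p - k) / 2 + 1) * Gamma ((p + k) / 2 + 3 / 2))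

theorem legendreMoment_zero (p : ℕ) : legendreMoment 0 p = 2 / (p + 1) := by
  have hdup := two_pow_mul_Gamma_mul_Gamma_add_half_natCast p
  rw [show ((p : ℝ) + 1) / 2 + 1 / 2 = p / 2 + 1 by ring] at hdup
  rw [legendreMoment, Nat.cast_zero, sub_zero, add_zero,
    show (p : ℝ) / 2 + 3 / 2 = (p + 1) / 2 + 1 by ring,
    Gamma_add_one (s := (p + 1) / 2) (by positivity), div_eq_div_iff (by positivity) (by positivity)]
  linear_combination (-(p : ℝ) - 1) * hdup

theorem legendreMoment_one (p : ℕ) : legendreMoment 1 p = 2 / (p + 2) := by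
  have hdup := two_pow_mul_Gamma_mul_Gamma_add_half_natCast p
  rw [legendreMoment, Nat.cast_one, show (p - 1 : ℝ) / 2 + 1 = (p + 1) / 2 by ring,
    show (p + 1 : ℝ) / 2 + 3 / 2 = (p + 1) / 2 + 1 / 2 + 1 by ring,
    Gamma_add_one (s := (p + 1) / 2 + 1 / 2) (by positivity),
    div_eq_div_iff (by positivity) (by positivity)]
  linear_combination (-(p : ℝ) - 2) * hdup

theorem legendreMoment_add_two (k p : ℕ) (hkp : k + 2 ≤ p) :
    legendreMoment (k + 2) p =
      (2 * k + 3) / (k + 2) * legendreMoment (k + 1) (p + 1)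
        - (k + 1) / (k + 2) * legendreMoment k p := by
  have hpk : 0 < (p : ℝ) - k := by
    have : (k : ℝ) + 2 ≤ p := by exact_mod_cast hkp
    linarith
  have hx : 0 < ((p : ℝ) - k) / 2 := half_pos hpk
  have hb : 0 < ((p : ℝ) + k) / 2 + 3 / 2 := by positivity
  obtain ⟨c, hc⟩ : ∃ c : ℝ, c = √π * Gamma (p + 1) /
      (2 ^ p * Gamma ((p - k) / 2) * Gamma ((p + k) / 2 + 3 / 2)) := ⟨_, rfl⟩
  have hΓx := Gamma_pos_of_pos hx
  have hΓb := Gamma_pos_of_pos hb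
  have h₀ : legendreMoment k p = c / ((p - k) / 2) := by
    rw [hc, legendreMoment, Gamma_add_one hx.ne']
    field_simp
  have h₁ : legendreMoment (k + 1) (p + 1) =
      c * (p + 1) / (2 * ((p - k) / 2) * ((p + k) / 2 + 3 / 2)) := by
    rw [hc, legendreMoment]
    push_cast
    rw [show ((p : ℝ) + 1 - (k + 1)) / 2 + 1 = (p - k) / 2 + 1 by ring,
      show ((p : ℝ) + 1 + (k + 1)) / 2 + 3 / 2 = (p + k) / 2 + 3 / 2 + 1 by ring,
      Gamma_add_one hx.ne', Gamma_add_one hb.ne', Gamma_add_one (s := (p : ℝ) + 1) (by positivity)]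
    field_simp
    ring
  have h₂ : legendreMoment (k + 2) p = c / ((p + k) / 2 + 3 / 2) := by
    rw [hc, legendreMoment]
    push_cast
    rw [show ((p : ℝ) - (k + 2)) / 2 + 1 = (p - k) / 2 by ring,
      show ((p : ℝ) + (k + 2)) / 2 + 3 / 2 = (p + k) / 2 + 3 / 2 + 1 by ring, Gamma_add_one hb.ne']
    field_simp
  rw [h₀, h₁, h₂]
  field_simp
  ring

theorem integral_pow_of_even {p : ℕ} (hp : Even p) : ∫ y in (-1 : ℝ)..1, y ^ p = 2 / (p + 1) := by
  rw [integral_pow, (hp.add_one).neg_one_pow]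
  ring

theorem integral_legendre_mul_pow_add_two (a b : ℝ) (k p : ℕ) :
    ∫ y in a..b, (legendre (k + 2)).eval y * y ^ p =
      (2 * k + 3) / (k + 2) * (∫ y in a..b, (legendre (k + 1)).eval y * y ^ (p + 1))
        - (k + 1) / (k + 2) * ∫ y in a..b, (legendre k).eval y * y ^ p := by
  have hint (j q : ℕ) : IntervalIntegrable (fun y ↦ (legendre j).eval y * y ^ q) volume a b :=
    ((legendre j).continuous.mul (continuous_pow q)).intervalIntegrable _ _
  rw [← intervalIntegral.integral_const_mul, ← intervalIntegral.integral_const_mul,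
    ← integral_sub ((hint _ _).const_mul _) ((hint _ _).const_mul _)]
  congr 1 with y
  simp only [legendre, eval_sub, eval_mul, eval_C, eval_X]
  ring

theorem integral_legendre_mul_pow (k p : ℕ) (hkp : k ≤ p) (hpar : Even (k + p)) :
    ∫ y in (-1 : ℝ)..1, (legendre k).eval y * y ^ p = legendreMoment k p := by
  induction k using Nat.twoStepInduction generalizing p with
  | zero =>
    simp only [legendre, eval_one, one_mul, legendreMoment_zero]
    exact integral_pow_of_even (by simpa using hpar)
  | one =>
    simp only [legendre, eval_X, ← pow_succ', legendreMoment_one]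
    rw [integral_pow_of_even (by rwa [add_comm] at hpar)]
    push_cast
    ring
  | more k ih₀ ih₁ =>
    rw [integral_legendre_mul_pow_add_two, ih₀ p (by omega) ?_, ih₁ (p + 1) (by omega) ?_,
      legendreMoment_add_two k p hkp]
    all_goals rw [Nat.even_iff] at hpar ⊢; omega

theorem legendre_moment_formula_general (m n δ : ℕ) (hmn : m ≤ n) :
    ∫ y in (-1:ℝ)..1, (legendre (2 * m + δ)).eval y * y ^ (2 * n + δ)
      = Real.sqrt Real.pi * Real.Gamma (2 * (n:ℝ) + 1 + δ) /
        (2 ^ (2 * n + δ) * Real.Gamma ((n:ℝ) - (m:ℝ) + 1) *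
          Real.Gamma (3 / 2 + (n:ℝ) + (m:ℝ) + δ)) := by
  rw [integral_legendre_mul_pow _ _ (by omega) ⟨m + n + δ, by ring⟩, legendreMoment]
  push_cast
  congr 3 <;> ring_nf

theorem legendre_moment_formula (m n δ : ℕ) (hδ : δ = 0 ∨ δ = 1) (hmn : m ≤ n) :
    ∫ y in (-1:ℝ)..1, (legendre (2 * m + δ)).eval y * y ^ (2 * n + δ)
      = Real.sqrt Real.pi * Real.Gamma (2 * (n:ℝ) + 1 + δ) /
        (2 ^ (2 * n + δ) * Real.Gamma ((n:ℝ) - (m:ℝ) + 1) *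
          Real.Gamma (3 / 2 + (n:ℝ) + (m:ℝ) + δ)) :=
  legendre_moment_formula_general m n δ hmn
end

section
/- Let q be continuous on [0,b] and f a non-vanishing C² solution of f'' = q f with f(0)=1. Define the formal powers φ_k via the recursive integrals X^{(n)} and X̃^{(n)} (Definition of SPPS). Then for k ≥ 1, φ_k'(x) = k·ψ_{k−1}(x) + (f'(x)/f(x))·φ_k(x) for all x ∈ [0,b]. -/
open MeasureTheory intervalIntegral

/-- The recursive integrals X^{(n)} associated with a particular solution f. -/
noncomputable def Xrec (f : ℝ → ℂ) : ℕ → ℝ → ℂ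
  | 0 => fun _ => 1
  | (n + 1) => fun x => (n + 1 : ℂ) *
      ∫ s in (0:ℝ)..x, Xrec f n s * ((f s ^ 2) ^ ((-1 : ℤ) ^ (n + 1)))

/-- The recursive integrals X̃^{(n)} associated with a particular solution f. -/
noncomputable def Xtrec (f : ℝ → ℂ) : ℕ → ℝ → ℂ
  | 0 => fun _ => 1
  | (n + 1) => fun x => (n + 1 : ℂ) *
      ∫ s in (0:ℝ)..x, Xtrec f n s * ((f s ^ 2) ^ ((-1 : ℤ) ^ n))

/-- The formal powers φ_k associated with f. -/
noncomputable def phiFP (f : ℝ → ℂ) (k : ℕ) (x : ℝ) : ℂ :=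
  if Odd k then f x * Xrec f k x else f x * Xtrec f k x

/-- The formal powers ψ_k associated with f. -/
noncomputable def psiFP (f : ℝ → ℂ) (k : ℕ) (x : ℝ) : ℂ :=
  if Odd k then Xtrec f k x / f x else Xrec f k x / f x

/-! Each of `X^{(k)}`, `X̃^{(k)}` is `k` times a primitive of a continuous function, so its
derivative is `k X^{(k-1)} (f²)^{±1}` (resp. with `X̃`). The parities in `φ_k` and `ψ_{k-1}` are
arranged so that `φ_k = f X` and `ψ_{k-1} = Y / f` for the same recursion `X' = k Y f⁻²`, and the
product rule gives `(f X)' = f' X + k Y / f = k ψ_{k-1} + (f'/f) φ_k`. -/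

open Set

theorem hasDerivWithinAt_integral_Icc {E : Type*} [NormedAddCommGroup E] [NormedSpace ℝ E]
    [CompleteSpace E] {a b x : ℝ} {g : ℝ → E} (hg : ContinuousOn g (Icc a b))
    (hx : x ∈ Icc a b) :
    HasDerivWithinAt (fun u => ∫ s in a..u, g s) (g x) (Icc a b) x := by
  have : Fact (x ∈ Icc a b) := ⟨hx⟩
  refine integral_hasDerivWithinAt_right ?_ ⟨Icc a b, self_mem_nhdsWithin,
    hg.aestronglyMeasurable measurableSet_Icc⟩ (hg x hx)
  refine (hg.mono ?_).intervalIntegrable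
  rw [uIcc_of_le hx.1]
  exact Icc_subset_Icc le_rfl hx.2

section IntegralRecursion

variable {a b : ℝ} {F w : ℕ → ℝ → ℂ}

theorem continuousOn_of_integral_recursion (hF₀ : ContinuousOn (F 0) (Icc a b))
    (hw : ∀ n, ContinuousOn (w n) (Icc a b))
    (hF : ∀ n, F (n + 1) = fun x => (n + 1 : ℂ) * ∫ s in a..x, F n s * w n s) (n : ℕ) :
    ContinuousOn (F n) (Icc a b) := by
  induction n with
  | zero => exact hF₀
  | succ n ih =>
    rw [hF n]
    exact continuousOn_const.mul fun x hx =>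
      (hasDerivWithinAt_integral_Icc (ih.mul (hw n)) hx).continuousWithinAt

theorem hasDerivWithinAt_of_integral_recursion (hF₀ : ContinuousOn (F 0) (Icc a b))
    (hw : ∀ n, ContinuousOn (w n) (Icc a b))
    (hF : ∀ n, F (n + 1) = fun x => (n + 1 : ℂ) * ∫ s in a..x, F n s * w n s) (n : ℕ)
    {x : ℝ} (hx : x ∈ Icc a b) :
    HasDerivWithinAt (F (n + 1)) ((n + 1 : ℂ) * (F n x * w n x)) (Icc a b) x := by
  rw [hF n]
  exact ((hasDerivWithinAt_integral_Icc
    ((continuousOn_of_integral_recursion hF₀ hw hF n).mul (hw n)) hx)).const_mul _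

end IntegralRecursion

theorem continuousOn_sq_zpow {a b : ℝ} {f : ℝ → ℂ} (hf : ContinuousOn f (Icc a b))
    (hfne : ∀ x ∈ Icc a b, f x ≠ 0) (m : ℤ) :
    ContinuousOn (fun s => (f s ^ 2) ^ m) (Icc a b) :=
  (hf.pow 2).zpow₀ m fun x hx => Or.inl (pow_ne_zero 2 (hfne x hx))

theorem HasDerivWithinAt.mul_of_deriv_eq_mul_inv_sq {f X : ℝ → ℂ} {s : Set ℝ} {x : ℝ}
    {f' c Y : ℂ} (hf : HasDerivWithinAt f f' s x)
    (hX : HasDerivWithinAt X (c * (Y * (f x ^ 2) ^ (-1 : ℤ))) s x) (hfx : f x ≠ 0) :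
    HasDerivWithinAt (fun y => f y * X y) (c * (Y / f x) + f' / f x * (f x * X x)) s x := by
  refine (hf.mul hX).congr_deriv ?_
  rw [zpow_neg_one]
  field_simp
  ring

section FormalPowers

variable {b : ℝ} {f : ℝ → ℂ}

theorem hasDerivWithinAt_Xrec (hf : ContinuousOn f (Icc 0 b))
    (hfne : ∀ x ∈ Icc 0 b, f x ≠ 0) (n : ℕ) {x : ℝ} (hx : x ∈ Icc 0 b) :
    HasDerivWithinAt (Xrec f (n + 1))
      ((n + 1 : ℂ) * (Xrec f n x * (f x ^ 2) ^ ((-1 : ℤ) ^ (n + 1)))) (Icc 0 b) x :=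
  hasDerivWithinAt_of_integral_recursion (w := fun n s => (f s ^ 2) ^ ((-1 : ℤ) ^ (n + 1)))
    continuousOn_const (fun _ => continuousOn_sq_zpow hf hfne _) (fun _ => rfl) n hx

theorem hasDerivWithinAt_Xtrec (hf : ContinuousOn f (Icc 0 b))
    (hfne : ∀ x ∈ Icc 0 b, f x ≠ 0) (n : ℕ) {x : ℝ} (hx : x ∈ Icc 0 b) :
    HasDerivWithinAt (Xtrec f (n + 1))
      ((n + 1 : ℂ) * (Xtrec f n x * (f x ^ 2) ^ ((-1 : ℤ) ^ n))) (Icc 0 b) x :=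
  hasDerivWithinAt_of_integral_recursion (w := fun n s => (f s ^ 2) ^ ((-1 : ℤ) ^ n))
    continuousOn_const (fun _ => continuousOn_sq_zpow hf hfne _) (fun _ => rfl) n hx

end FormalPowers

theorem formal_power_derivative_general (b : ℝ) (f f' : ℝ → ℂ)
    (hf : ∀ x ∈ Set.Icc (0:ℝ) b, HasDerivWithinAt f (f' x) (Set.Icc 0 b) x)
    (hfne : ∀ x ∈ Set.Icc (0:ℝ) b, f x ≠ 0) :
    ∀ k : ℕ, 1 ≤ k → ∀ x ∈ Set.Icc (0:ℝ) b,
      HasDerivWithinAt (phiFP f k)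
        ((k : ℂ) * psiFP f (k - 1) x + (f' x / f x) * phiFP f k x)
        (Set.Icc 0 b) x := by
  have hfc : ContinuousOn f (Icc 0 b) := fun x hx => (hf x hx).continuousWithinAt
  intro k hk x hx
  obtain ⟨n, rfl⟩ := Nat.exists_eq_add_of_le' hk
  rw [Nat.add_sub_cancel]
  push_cast
  rcases Nat.even_or_odd n with hn | hn
  · have hodd : Odd (n + 1) := hn.add_one
    have hphi : phiFP f (n + 1) = fun y => f y * Xrec f (n + 1) y := funext fun _ => if_pos hodd
    rw [psiFP, if_neg (Nat.not_odd_iff_even.2 hn), hphi]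
    refine (hf x hx).mul_of_deriv_eq_mul_inv_sq ?_ (hfne x hx)
    simpa only [hodd.neg_one_pow] using hasDerivWithinAt_Xrec hfc hfne n hx
  · have heven : ¬Odd (n + 1) := Nat.not_odd_iff_even.2 hn.add_one
    have hphi : phiFP f (n + 1) = fun y => f y * Xtrec f (n + 1) y := funext fun _ => if_neg heven
    rw [psiFP, if_pos hn, hphi]
    refine (hf x hx).mul_of_deriv_eq_mul_inv_sq ?_ (hfne x hx)
    simpa only [hn.neg_one_pow] using hasDerivWithinAt_Xtrec hfc hfne n hx

theorem formal_power_derivative (b : ℝ) (hb : 0 < b) (q f f' f'' : ℝ → ℂ)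
    (hq : ContinuousOn q (Set.Icc 0 b))
    (hf : ∀ x ∈ Set.Icc (0:ℝ) b, HasDerivWithinAt f (f' x) (Set.Icc 0 b) x)
    (hf' : ∀ x ∈ Set.Icc (0:ℝ) b, HasDerivWithinAt f' (f'' x) (Set.Icc 0 b) x)
    (hf'' : ContinuousOn f'' (Set.Icc 0 b))
    (hODE : ∀ x ∈ Set.Icc (0:ℝ) b, f'' x = q x * f x)
    (hf0 : f 0 = 1) (hfne : ∀ x ∈ Set.Icc (0:ℝ) b, f x ≠ 0) :
    ∀ k : ℕ, 1 ≤ k → ∀ x ∈ Set.Icc (0:ℝ) b,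
      HasDerivWithinAt (phiFP f k)
        ((k : ℂ) * psiFP f (k - 1) x + (f' x / f x) * phiFP f k x)
        (Set.Icc 0 b) x :=
  formal_power_derivative_general b f f' hf hfne
end
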